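/- arXiv:1811.05087 — 5 statements merged into one kernel-verified Lean document; each statement's English description precedes it below -/
import Mathlib

section
/- If a coordinate j of x is updated by the rule x'ⱼ = xⱼ - ∇ⱼf_ε(x)/Γ (other coordinates unchanged), and S₁ = Σ_{j even} xⱼ, S₋₁ = Σ_{j odd} (-xⱼ), then with the updated coordinate chosen uniformly at random from {1,...,n}, the expected value of S(t+1) := S₁(t+1) + S₋₁(t+1) satisfies E[S(t+1) | S(t)] = S(t)·(1 - (1-ε)/(nΓ)), provided the number of even-indexed and odd-indexed coordinates are equal. -/
open Finset

lemma range_even_odd_card (m : ℕ) :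
    ((Finset.range (2*m)).filter (fun i => i % 2 = 0)).card = m ∧
    ((Finset.range (2*m)).filter (fun i => i % 2 = 1)).card = m := by
  induction m with
  | zero => simp
  | succ m ih =>
    have h : 2 * (m + 1) = (2 * m + 1) + 1 := by ring
    rw [h, Finset.range_add_one, Finset.range_add_one, Finset.filter_insert, Finset.filter_insert,
      Finset.filter_insert, Finset.filter_insert]
    have h1 : (2 * m) % 2 = 0 := by omega
    have h2 : (2 * m + 1) % 2 = 1 := by omega
    constructor
    · rw [if_neg (by omega), if_pos h1, Finset.card_insert_of_notMem (by simp), ih.1]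
    · rw [if_pos h2, if_neg (by omega), Finset.card_insert_of_notMem (by simp), ih.2]

lemma fin_card_eq (n : ℕ) (r : ℕ) :
    (Finset.univ.filter (fun j : Fin n => (j : ℕ) % 2 = r)).card
      = ((Finset.range n).filter (fun i => i % 2 = r)).card := by
  rw [← Finset.card_image_of_injective (Finset.univ.filter (fun j : Fin n => (j : ℕ) % 2 = r))
    Fin.val_injective]
  congr 1
  ext i
  simp only [Finset.mem_image, Finset.mem_filter, Finset.mem_univ, true_and, Finset.mem_range]
  constructor
  · rintro ⟨a, ha, rfl⟩; exact ⟨a.isLt, ha⟩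
  · rintro ⟨hi, hr⟩; exact ⟨⟨i, hi⟩, hr, rfl⟩

theorem expected_S_one_step (n : ℕ) (hn : 0 < n) (hn2 : Even n)
    (ε Γ : ℝ) (hΓ : 0 < Γ)
    (step : (Fin n → ℝ) → Fin n → (Fin n → ℝ))
    (hstep : ∀ (x : Fin n → ℝ) (j : Fin n),
      step x j = Function.update x j
        (x j - ((1 - ε) * x j + ε * ∑ i, x i) / Γ))
    (S : (Fin n → ℝ) → ℝ)
    (hS : ∀ x : Fin n → ℝ,
      S x = (∑ j ∈ Finset.univ.filter (fun j : Fin n => (j : ℕ) % 2 = 0), x j)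
          + (∑ j ∈ Finset.univ.filter (fun j : Fin n => (j : ℕ) % 2 = 1), (- x j)))
    (x : Fin n → ℝ) :
    (∑ j, S (step x j)) / n = S x * (1 - (1 - ε) / (n * Γ)) := by
  obtain ⟨m, hm⟩ := hn2
  have hm' : n = 2 * m := by omega
  set A := Finset.univ.filter (fun j : Fin n => (j : ℕ) % 2 = 0) with hA
  set B := Finset.univ.filter (fun j : Fin n => (j : ℕ) % 2 = 1) with hB
  set T := ∑ i, x i with hT
  set d : Fin n → ℝ := fun j => ((1 - ε) * x j + ε * T) / Γ with hd
  set σ : Fin n → ℝ := fun j => if (j : ℕ) % 2 = 0 then 1 else -1 with hσ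
  -- each step changes S by -σ j * d j
  have key : ∀ j : Fin n, S (step x j) = S x - σ j * d j := by
    intro j
    rw [hS, hS, hstep]
    have hupd : ∀ (s : Finset (Fin n)) (f : ℝ → ℝ), j ∉ s →
        ∑ i ∈ s, f (Function.update x j (x j - d j) i) = ∑ i ∈ s, f (x i) := by
      intro s f hjs
      apply Finset.sum_congr rfl
      intro i hi
      rw [Function.update_of_ne (by rintro rfl; exact hjs hi)]
    by_cases hj : (j : ℕ) % 2 = 0
    · have hjA : j ∈ A := by simp [hA, hj]
      have hjB : j ∉ B := by simp [hB, hj]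
      have e1 : ∑ i ∈ A, Function.update x j (x j - d j) i
          = (x j - d j) + ∑ i ∈ A.erase j, x i := by
        rw [Finset.sum_update_of_mem hjA, ← Finset.erase_eq]
      have e2 : ∑ i ∈ A, x i = x j + ∑ i ∈ A.erase j, x i :=
        (Finset.add_sum_erase _ _ hjA).symm
      have e3 : ∑ i ∈ B, (- Function.update x j (x j - d j) i) = ∑ i ∈ B, (- x i) :=
        hupd B (fun t => -t) hjB
      rw [e1, e3, e2]
      simp only [hσ, if_pos hj]
      ring
    · have hj1 : (j : ℕ) % 2 = 1 := by omega
      have hjB : j ∈ B := by simp [hB, hj1]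
      have hjA : j ∉ A := by simp [hA, hj1]
      have e1 : ∑ i ∈ B, (- Function.update x j (x j - d j) i)
          = -(x j - d j) + ∑ i ∈ B.erase j, (- x i) := by
        rw [← Finset.add_sum_erase _ _ hjB]
        congr 1
        · rw [Function.update_self]
        · apply Finset.sum_congr rfl
          intro i hi
          rw [Function.update_of_ne (Finset.ne_of_mem_erase hi)]
      have e2 : ∑ i ∈ B, (- x i) = (- x j) + ∑ i ∈ B.erase j, (- x i) :=
        (Finset.add_sum_erase _ _ hjB).symm
      have e3 : ∑ i ∈ A, Function.update x j (x j - d j) i = ∑ i ∈ A, x i :=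
        hupd A id hjA
      rw [e1, e3, e2]
      simp only [hσ, if_neg hj]
      ring
  have hsplit : ∀ f : Fin n → ℝ, ∑ j, f j = ∑ j ∈ A, f j + ∑ j ∈ B, f j := by
    intro f
    rw [hA, hB, ← Finset.sum_filter_add_sum_filter_not Finset.univ (fun j : Fin n => (j : ℕ) % 2 = 0) f]
    congr 1
    apply Finset.sum_congr _ (fun _ _ => rfl)
    apply Finset.filter_congr
    intro j _
    constructor
    · intro h; omega
    · intro h; omega
  have hcard : (A.card : ℝ) = (B.card : ℝ) := by
    rw [hA, hB, fin_card_eq n 0, fin_card_eq n 1, hm',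
      (range_even_odd_card m).1, (range_even_odd_card m).2]
  have hσx : ∑ j, σ j * x j = S x := by
    rw [hsplit, hS]
    congr 1
    · apply Finset.sum_congr rfl; intro j hj
      simp only [hA, Finset.mem_filter] at hj
      simp [hσ, hj.2]
    · apply Finset.sum_congr rfl; intro j hj
      simp only [hB, Finset.mem_filter] at hj
      have : (j:ℕ) % 2 ≠ 0 := by omega
      simp [hσ, this]
  have hσ0 : ∑ j, σ j = 0 := by
    rw [hsplit]
    have h1 : ∑ j ∈ A, σ j = (A.card : ℝ) := by
      rw [Finset.sum_congr rfl (fun j hj => ?_), Finset.sum_const, nsmul_eq_mul, mul_one]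
      simp only [hA, Finset.mem_filter] at hj
      simp [hσ, hj.2]
    have h2 : ∑ j ∈ B, σ j = -(B.card : ℝ) := by
      rw [Finset.sum_congr rfl (fun j hj => ?_), Finset.sum_const, nsmul_eq_mul, mul_neg_one]
      simp only [hB, Finset.mem_filter] at hj
      have : (j:ℕ) % 2 ≠ 0 := by omega
      simp [hσ, this]
    rw [h1, h2, hcard]; ring
  have hsum : ∑ j, S (step x j) = n * S x - (1 - ε) * S x / Γ := by
    calc ∑ j, S (step x j) = ∑ j : Fin n, (S x - σ j * d j) :=
          Finset.sum_congr rfl (fun j _ => key j)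
      _ = n * S x - ∑ j, σ j * d j := by
          rw [Finset.sum_sub_distrib, Finset.sum_const, Finset.card_univ, Fintype.card_fin,
            nsmul_eq_mul]
      _ = n * S x - (1 - ε) * S x / Γ := by
          congr 1
          calc ∑ j, σ j * d j
              = ∑ j, ((1 - ε) * (σ j * x j) + ε * T * σ j) / Γ :=
                Finset.sum_congr rfl (fun j _ => by rw [hd]; ring)
            _ = ((1 - ε) * (∑ j, σ j * x j) + ε * T * (∑ j, σ j)) / Γ := by
                rw [← Finset.sum_div, Finset.sum_add_distrib, ← Finset.mul_sum, ← Finset.mul_sum]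
            _ = (1 - ε) * S x / Γ := by rw [hσx, hσ0]; ring
  have hn0 : (n : ℝ) ≠ 0 := Nat.cast_ne_zero.mpr hn.ne'
  rw [hsum]
  field_simp
end

section
/- Starting from x⁰ with even coordinates +1 and odd coordinates -1, sequential stochastic coordinate descent on f_ε with step size 1/Γ satisfies E[f_ε(x^t) - f_ε(x*)] ≥ (1 - 2(1-ε)/(nΓ))^t · (f_ε(x⁰) - f_ε(x*)) for all t, where x* = 0 is the minimizer. -/
set_option maxHeartbeats 1600000 in
theorem scd_lower_bound (n : ℕ) (hn : 0 < n) (hn2 : Even n)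
    (ε Γ : ℝ) (hε0 : 0 ≤ ε) (hε1 : ε < 1) (hΓ : 1 ≤ Γ)
    (f : (Fin n → ℝ) → ℝ)
    (hf : ∀ x : Fin n → ℝ,
      f x = (1 - ε) / 2 * ∑ i, (x i) ^ 2 + ε / 2 * (∑ i, x i) ^ 2)
    (step : (Fin n → ℝ) → Fin n → (Fin n → ℝ))
    (hstep : ∀ (x : Fin n → ℝ) (j : Fin n),
      step x j = Function.update x j
        (x j - ((1 - ε) * x j + ε * ∑ i, x i) / Γ))
    (x0 : Fin n → ℝ)
    (hx0 : ∀ j : Fin n, x0 j = if (j : ℕ) % 2 = 0 then 1 else -1)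
    (t : ℕ) :
    (∑ σ : Fin t → Fin n, f (List.foldl step x0 (List.ofFn σ))) / (n : ℝ) ^ t
      ≥ (1 - 2 * (1 - ε) / (n * Γ)) ^ t * (f x0 - 0) := by
  have hΓ0 : (0:ℝ) < Γ := lt_of_lt_of_le one_pos hΓ
  have hn2' : 2 ≤ n := by
    rcases hn2 with ⟨k, hk⟩
    omega
  have hnR : (2:ℝ) ≤ (n:ℝ) := by exact_mod_cast hn2'
  have hnpos : (0:ℝ) < (n:ℝ) := by positivity
  -- the sign vector
  set s : Fin n → ℝ := fun j => if (j:ℕ) % 2 = 0 then 1 else -1 with hs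
  have hs_sq : ∀ j, s j * s j = 1 := by
    intro j; simp only [hs]; split <;> norm_num
  have hs_sum : ∑ j, s j = 0 := by
    have h1 : ∀ j : Fin n, s j = (-1:ℝ) ^ (j:ℕ) := by
      intro j
      simp only [hs]
      rcases Nat.even_or_odd (j:ℕ) with h | h
      · rw [if_pos (Nat.even_iff.mp h), (Even.neg_one_pow h)]
      · have hmod := Nat.odd_iff.mp h
        rw [if_neg (by omega), (Odd.neg_one_pow h)]
    rw [Finset.sum_congr rfl (fun j _ => h1 j), Fin.sum_univ_eq_sum_range]
    simpa [hn2] using (neg_one_geom_sum (α := ℝ) (n := n))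
  -- the linear functional
  set L : (Fin n → ℝ) → ℝ := fun x => ∑ j, s j * x j with hL
  set r : ℝ := (n:ℝ) - (1 - ε) / Γ with hr
  -- one step
  have hLupd : ∀ (x : Fin n → ℝ) (a : Fin n) (v : ℝ),
      L (Function.update x a v) = L x + s a * (v - x a) := by
    intro x a v
    have h1 : L (Function.update x a v) - L x
        = ∑ j, (s j * Function.update x a v j - s j * x j) := by
      rw [Finset.sum_sub_distrib]
    have h2 : ∑ j, (s j * Function.update x a v j - s j * x j)
        = s a * v - s a * x a := by
      rw [Finset.sum_eq_single a]
      · simp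
      · intro b _ hb
        rw [Function.update_of_ne hb]; ring
      · intro h; exact absurd (Finset.mem_univ a) h
    have := h1.trans h2
    linarith [this]
  have hstep1 : ∀ x : Fin n → ℝ, ∑ a, L (step x a) = r * L x := by
    intro x
    have hLa : ∀ a, L (step x a)
        = L x - s a * ((1 - ε) * x a + ε * ∑ i, x i) / Γ := by
      intro a
      rw [hstep, hLupd]; ring
    have hg : ∑ a, s a * ((1 - ε) * x a + ε * ∑ i, x i) = (1 - ε) * L x := by
      have h1 : ∀ a : Fin n, s a * ((1 - ε) * x a + ε * ∑ i, x i)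
          = (1 - ε) * (s a * x a) + (ε * ∑ i, x i) * s a := fun a => by ring
      rw [Finset.sum_congr rfl (fun a _ => h1 a), Finset.sum_add_distrib,
        ← Finset.mul_sum, ← Finset.mul_sum, hs_sum, mul_zero, add_zero, hL]
    calc ∑ a, L (step x a)
        = ∑ a, (L x - s a * ((1 - ε) * x a + ε * ∑ i, x i) / Γ) :=
          Finset.sum_congr rfl (fun a _ => hLa a)
      _ = (n:ℝ) * L x - (∑ a, s a * ((1 - ε) * x a + ε * ∑ i, x i)) / Γ := by
          rw [Finset.sum_sub_distrib, Finset.sum_const, Finset.card_univ,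
            Fintype.card_fin, nsmul_eq_mul, ← Finset.sum_div]
      _ = r * L x := by rw [hg, hr]; ring
  -- iterate
  have key : ∀ (m : ℕ) (x : Fin n → ℝ),
      ∑ σ : Fin m → Fin n, L (List.foldl step x (List.ofFn σ)) = r ^ m * L x := by
    intro m
    induction m with
    | zero => intro x; simp
    | succ m ih =>
      intro x
      rw [← Equiv.sum_comp (Fin.consEquiv (fun _ : Fin (m+1) => Fin n))
        (fun σ : Fin (m+1) → Fin n => L (List.foldl step x (List.ofFn σ)))]
      rw [Fintype.sum_prod_type]
      have h1 : ∀ (a : Fin n) (τ : Fin m → Fin n),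
          List.ofFn ((Fin.consEquiv (fun _ : Fin (m+1) => Fin n)) (a, τ))
            = a :: List.ofFn τ := by
        intro a τ
        show List.ofFn (Fin.cons a τ) = a :: List.ofFn τ
        simp [List.ofFn_succ]
      calc ∑ a : Fin n, ∑ τ : Fin m → Fin n,
            L (List.foldl step x
              (List.ofFn ((Fin.consEquiv (fun _ : Fin (m+1) => Fin n)) (a, τ))))
          = ∑ a : Fin n, ∑ τ : Fin m → Fin n,
            L (List.foldl step (step x a) (List.ofFn τ)) := by
            refine Finset.sum_congr rfl (fun a _ => Finset.sum_congr rfl (fun τ _ => ?_))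
            rw [h1, List.foldl_cons]
        _ = ∑ a : Fin n, r ^ m * L (step x a) :=
            Finset.sum_congr rfl (fun a _ => ih (step x a))
        _ = r ^ m * (r * L x) := by rw [← Finset.mul_sum, hstep1 x]
        _ = r ^ (m+1) * L x := by ring
  -- initial values
  have hx0s : ∀ j, x0 j = s j := fun j => by rw [hx0, hs]
  have hLx0 : L x0 = (n:ℝ) := by
    rw [hL]
    calc ∑ j, s j * x0 j = ∑ j : Fin n, (1:ℝ) :=
          Finset.sum_congr rfl (fun j _ => by rw [hx0s, hs_sq])
      _ = (n:ℝ) := by simp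
  have hSx0 : ∑ i, x0 i = 0 := by
    rw [← hs_sum]; exact Finset.sum_congr rfl (fun j _ => hx0s j)
  have hfx0 : f x0 = (1 - ε) * (n:ℝ) / 2 := by
    rw [hf, hSx0]
    have : ∑ i, (x0 i) ^ 2 = (n:ℝ) := by
      calc ∑ i, (x0 i) ^ 2 = ∑ i : Fin n, (1:ℝ) :=
            Finset.sum_congr rfl (fun j _ => by rw [hx0s, sq, hs_sq])
        _ = (n:ℝ) := by simp
    rw [this]; ring
  -- pointwise lower bound on f
  have hfL : ∀ x : Fin n → ℝ, (1 - ε) / (2 * n) * (L x) ^ 2 ≤ f x := by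
    intro x
    rw [hf]
    have h1 : (L x) ^ 2 ≤ (n:ℝ) * ∑ i, (x i) ^ 2 := by
      have h := Finset.sum_mul_sq_le_sq_mul_sq Finset.univ s x
      have h2 : ∑ j, s j ^ 2 = (n:ℝ) := by
        calc ∑ j, s j ^ 2 = ∑ j : Fin n, (1:ℝ) :=
              Finset.sum_congr rfl (fun j _ => by rw [sq, hs_sq])
          _ = (n:ℝ) := by simp
      rw [h2] at h
      exact h
    have h3 : (0:ℝ) ≤ (∑ i, x i) ^ 2 := sq_nonneg _
    have h4 : (0:ℝ) ≤ 1 - ε := by linarith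
    have h5 : (1 - ε) / (2 * n) * (L x) ^ 2 ≤ (1 - ε) / 2 * ∑ i, (x i) ^ 2 := by
      rw [div_mul_eq_mul_div, div_mul_eq_mul_div,
        div_le_div_iff₀ (by positivity) (by norm_num : (0:ℝ) < 2)]
      nlinarith [mul_le_mul_of_nonneg_left h1 h4]
    nlinarith
  -- Cauchy-Schwarz / Jensen over trajectories
  have hcard : (Fintype.card (Fin t → Fin n) : ℝ) = (n:ℝ) ^ t := by
    rw [Fintype.card_fun, Fintype.card_fin, Fintype.card_fin]
    push_cast; ring
  have hjensen : (∑ σ : Fin t → Fin n, L (List.foldl step x0 (List.ofFn σ))) ^ 2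
      ≤ (n:ℝ) ^ t * ∑ σ : Fin t → Fin n, (L (List.foldl step x0 (List.ofFn σ))) ^ 2 := by
    have h := Finset.sum_mul_sq_le_sq_mul_sq Finset.univ
      (fun σ : Fin t → Fin n => (1:ℝ))
      (fun σ => L (List.foldl step x0 (List.ofFn σ)))
    simpa [Finset.card_univ, hcard, one_mul] using h
  have hsumL : ∑ σ : Fin t → Fin n, L (List.foldl step x0 (List.ofFn σ))
      = r ^ t * (n:ℝ) := by rw [key t x0, hLx0]
  have hsumf : (1 - ε) / (2 * n) * ∑ σ : Fin t → Fin n,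
      (L (List.foldl step x0 (List.ofFn σ))) ^ 2
      ≤ ∑ σ : Fin t → Fin n, f (List.foldl step x0 (List.ofFn σ)) := by
    rw [Finset.mul_sum]
    exact Finset.sum_le_sum (fun σ _ => hfL _)
  -- final arithmetic
  set ρ : ℝ := 1 - 2 * (1 - ε) / ((n:ℝ) * Γ) with hρ
  have hntpos : (0:ℝ) < (n:ℝ) ^ t := by positivity
  rw [ge_iff_le, le_div_iff₀ hntpos, hfx0, sub_zero]
  have hsumL2 : r ^ t * (n:ℝ) * (r ^ t * (n:ℝ))
      ≤ (n:ℝ) ^ t * ∑ σ : Fin t → Fin n, (L (List.foldl step x0 (List.ofFn σ))) ^ 2 := by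
    calc r ^ t * (n:ℝ) * (r ^ t * (n:ℝ))
        = (∑ σ : Fin t → Fin n, L (List.foldl step x0 (List.ofFn σ))) ^ 2 := by
          rw [hsumL]; ring
      _ ≤ _ := hjensen
  -- the key base inequality
  have hbase : ρ * (n:ℝ) ^ 2 ≤ r ^ 2 := by
    have h1 : ρ * (n:ℝ) ^ 2 = (n:ℝ)^2 - 2 * (n:ℝ) * (1 - ε) / Γ := by
      rw [hρ]; field_simp
    rw [h1, hr]
    have h2 : ((n:ℝ) - (1 - ε)/Γ)^2
        = (n:ℝ)^2 - 2*(n:ℝ)*(1-ε)/Γ + ((1-ε)/Γ)^2 := by ring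
    nlinarith [sq_nonneg ((1-ε)/Γ)]
  have hbase0 : (0:ℝ) ≤ ρ * (n:ℝ) ^ 2 := by
    have h1 : 2 * (1 - ε) / ((n:ℝ) * Γ) ≤ 1 := by
      rw [div_le_one (by positivity)]
      nlinarith
    have hρ0 : (0:ℝ) ≤ ρ := by rw [hρ]; linarith
    positivity
  have hpow : (ρ * (n:ℝ)^2) ^ t ≤ (r ^ 2) ^ t := pow_le_pow_left₀ hbase0 hbase t
  have h4ε : (0:ℝ) ≤ 1 - ε := by linarith
  have hrt : (r^2)^t = r^t * r^t := by
    rw [← pow_mul, mul_comm 2 t, pow_mul, sq]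
  have hn2t : (((n:ℝ))^2)^t = (n:ℝ)^t * (n:ℝ)^t := by
    rw [← pow_mul, mul_comm 2 t, pow_mul, sq]
  -- combine everything
  have hc : (0:ℝ) ≤ (1 - ε) / (2 * (n:ℝ)) := by positivity
  have hxy : (1 - ε) / (2 * (n:ℝ)) * (n:ℝ)^2 = (1 - ε) * (n:ℝ) / 2 := by
    field_simp
  have hA : ρ ^ t * ((1 - ε) * (n:ℝ) / 2) * (n:ℝ) ^ t * (n:ℝ) ^ t
      = (1 - ε) / (2 * (n:ℝ)) * ((ρ * (n:ℝ)^2) ^ t * (n:ℝ)^2) := by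
    rw [← hxy, mul_pow, hn2t]
    ring
  refine le_of_mul_le_mul_right ?_ hntpos
  calc ρ ^ t * ((1 - ε) * (n:ℝ) / 2) * (n:ℝ) ^ t * (n:ℝ) ^ t
      = (1 - ε) / (2 * (n:ℝ)) * ((ρ * (n:ℝ)^2) ^ t * (n:ℝ)^2) := hA
    _ ≤ (1 - ε) / (2 * (n:ℝ)) * ((r^2) ^ t * (n:ℝ)^2) :=
        mul_le_mul_of_nonneg_left
          (mul_le_mul_of_nonneg_right hpow (sq_nonneg (n:ℝ))) hc
    _ = (1 - ε) / (2 * (n:ℝ)) * (r ^ t * (n:ℝ) * (r ^ t * (n:ℝ))) := by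
        rw [hrt]; ring
    _ ≤ (1 - ε) / (2 * (n:ℝ)) * ((n:ℝ) ^ t * ∑ σ : Fin t → Fin n,
          (L (List.foldl step x0 (List.ofFn σ))) ^ 2) :=
        mul_le_mul_of_nonneg_left hsumL2 hc
    _ = ((1 - ε) / (2 * (n:ℝ)) * ∑ σ : Fin t → Fin n,
          (L (List.foldl step x0 (List.ofFn σ))) ^ 2) * (n:ℝ) ^ t := by ring
    _ ≤ (∑ σ : Fin t → Fin n, f (List.foldl step x0 (List.ofFn σ))) * (n:ℝ) ^ t :=
        mul_le_mul_of_nonneg_right hsumf (le_of_lt hntpos)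
end

section
/- Let σ be a random string of length q' ≤ √n over an alphabet of size n ≥ 9, with characters chosen independently and uniformly. Then for any γ ≥ 4, the probability that σ contains at least γ+1 reappearing characters (characters that occurred earlier in the string) is at most e^{-γ}. -/
open Nat

private lemma exp_le_factorial (k : ℕ) (hk : 5 ≤ k) :
    Real.exp ((k : ℝ) - 1) ≤ (k ! : ℝ) := by
  induction k, hk using Nat.le_induction with
  | base =>
    have h1 : Real.exp 1 ≤ 2.7182818286 := le_of_lt Real.exp_one_lt_d9
    have h4 : Real.exp (((5:ℕ) : ℝ) - 1) = Real.exp 1 ^ 4 := by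
      rw [← Real.exp_nat_mul]; norm_num
    rw [h4]
    calc Real.exp 1 ^ 4 ≤ 2.7182818286 ^ 4 :=
          pow_le_pow_left₀ (Real.exp_pos 1).le h1 4
      _ ≤ ((5:ℕ)! : ℝ) := by norm_num [Nat.factorial]
  | succ k hk ih =>
    have h3 : Real.exp 1 ≤ 3 := by
      have := Real.exp_one_lt_d9; linarith
    have hfac : (0:ℝ) ≤ (k ! : ℝ) := by positivity
    have hsplit : Real.exp (((k+1 : ℕ) : ℝ) - 1) = Real.exp ((k:ℝ) - 1) * Real.exp 1 := by
      rw [← Real.exp_add]; push_cast; ring_nf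
    rw [hsplit]
    calc Real.exp ((k:ℝ)-1) * Real.exp 1 ≤ (k ! : ℝ) * 3 :=
          mul_le_mul ih h3 (Real.exp_pos 1).le hfac
      _ ≤ (k ! : ℝ) * ((k:ℝ)+1) := by
          have h5 : (5:ℝ) ≤ (k:ℝ) := by exact_mod_cast hk
          nlinarith
      _ = ((k+1)! : ℝ) := by rw [Nat.factorial_succ]; push_cast; ring

private lemma count_single (n q' k : ℕ) (S : Finset (Fin q')) (hS : S.card = k) :
    (Finset.univ.filter (fun σ : Fin q' → Fin n =>
      ∀ i ∈ S, ∃ j : Fin q', j < i ∧ σ j = σ i)).card ≤ q' ^ k * n ^ (q' - k) := by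
  classical
  set A := Finset.univ.filter (fun σ : Fin q' → Fin n =>
      ∀ i ∈ S, ∃ j : Fin q', j < i ∧ σ j = σ i) with hA
  set f : (Fin q' → Fin n) → ((↥S → Fin q') × (↥(Sᶜ : Finset (Fin q')) → Fin n)) :=
    fun σ => (fun i => if h : ∃ j : Fin q', j < (i : Fin q') ∧ σ j = σ (i : Fin q')
        then Classical.choose h else (i : Fin q'),
      fun i => σ (i : Fin q')) with hf
  have hinj : Set.InjOn f A := by
    intro σ₁ hσ₁ σ₂ hσ₂ heq
    have p₁ : ∀ i ∈ S, ∃ j : Fin q', j < i ∧ σ₁ j = σ₁ i :=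
      (Finset.mem_filter.mp hσ₁).2
    have p₂ : ∀ i ∈ S, ∃ j : Fin q', j < i ∧ σ₂ j = σ₂ i :=
      (Finset.mem_filter.mp hσ₂).2
    have main : ∀ m : ℕ, ∀ i : Fin q', (i : ℕ) = m → σ₁ i = σ₂ i := by
      intro m
      induction m using Nat.strong_induction_on with
      | _ m ih =>
        intro i him
        by_cases hiS : i ∈ S
        · have e₁ := p₁ i hiS
          have e₂ := p₂ i hiS
          have hfst := congrFun (congrArg Prod.fst heq) ⟨i, hiS⟩
          simp only [hf, dif_pos e₁, dif_pos e₂] at hfst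
          obtain ⟨hj₁lt, hj₁eq⟩ := Classical.choose_spec e₁
          obtain ⟨hj₂lt, hj₂eq⟩ := Classical.choose_spec e₂
          have hIH : σ₁ (Classical.choose e₁) = σ₂ (Classical.choose e₁) := by
            refine ih ((Classical.choose e₁ : Fin q') : ℕ) ?_ _ rfl
            rw [← him]; exact hj₁lt
          rw [← hj₁eq, hIH, hfst, hj₂eq]
        · have hic : i ∈ (Sᶜ : Finset (Fin q')) := Finset.mem_compl.mpr hiS
          exact congrFun (congrArg Prod.snd heq) ⟨i, hic⟩
    funext i
    exact main (i : ℕ) i rfl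
  have hle := Finset.card_le_card_of_injOn f (fun x _ => Finset.mem_univ (f x)) hinj
  simp only [Finset.card_univ, Fintype.card_prod, Fintype.card_fun,
    Fintype.card_coe, Finset.card_compl, hS, Fintype.card_fin] at hle
  exact hle

theorem reappearing_chars_tail_bound (n q' : ℕ) (hn : 9 ≤ n)
    (hq : (q' : ℝ) ≤ Real.sqrt n)
    (reapp : (Fin q' → Fin n) → ℕ)
    (hreapp : ∀ σ : Fin q' → Fin n,
      reapp σ = (Finset.univ.filter
        (fun i : Fin q' => ∃ j : Fin q', j < i ∧ σ j = σ i)).card)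
    (γ : ℝ) (hγ : 4 ≤ γ) :
    ((Finset.univ.filter
        (fun σ : Fin q' → Fin n => γ + 1 ≤ (reapp σ : ℝ))).card : ℝ) / (n : ℝ) ^ q'
      ≤ Real.exp (-γ) := by
  classical
  have hγ0 : (0:ℝ) ≤ γ := by linarith
  have hnpos : 0 < n := by omega
  have hn0 : (0:ℝ) < (n:ℝ) := by exact_mod_cast hnpos
  have hnq : (0:ℝ) < (n:ℝ) ^ q' := by positivity
  set k : ℕ := ⌈γ⌉₊ + 1 with hk
  have hceil4 : 4 ≤ ⌈γ⌉₊ := by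
    by_contra h
    push_neg at h
    have : ⌈γ⌉₊ ≤ 3 := by omega
    have := (Nat.ceil_le).mp this
    norm_num at this
    linarith
  have hk5 : 5 ≤ k := by omega
  have hkγ : γ ≤ (k:ℝ) - 1 := by
    have h := Nat.le_ceil γ
    have : ((⌈γ⌉₊ : ℝ)) = (k:ℝ) - 1 := by rw [hk]; push_cast; ring
    linarith
  set bad := Finset.univ.filter
      (fun σ : Fin q' → Fin n => γ + 1 ≤ (reapp σ : ℝ)) with hbad
  set bad2 := Finset.univ.filter
      (fun σ : Fin q' → Fin n => k ≤ reapp σ) with hbad2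
  have hsub1 : bad ⊆ bad2 := by
    intro σ hσ
    rw [hbad, Finset.mem_filter] at hσ
    rw [hbad2, Finset.mem_filter]
    refine ⟨Finset.mem_univ _, ?_⟩
    have h1 : ⌈γ + 1⌉₊ ≤ reapp σ := Nat.ceil_le.mpr hσ.2
    rwa [Nat.ceil_add_one hγ0] at h1
  have hexp : (0:ℝ) < Real.exp (-γ) := Real.exp_pos _
  by_cases hkq : q' < k
  · -- bad is empty
    have hbadempty : bad = ∅ := by
      rw [Finset.eq_empty_iff_forall_notMem]
      intro σ hσ
      have h2 := hsub1 hσ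
      rw [hbad2, Finset.mem_filter] at h2
      have h3 : reapp σ ≤ q' := by
        rw [hreapp σ]
        calc (Finset.univ.filter _).card ≤ (Finset.univ : Finset (Fin q')).card :=
              Finset.card_filter_le _ _
          _ = q' := by simp
      omega
    rw [hbadempty]
    simp only [Finset.card_empty, Nat.cast_zero, zero_div]
    exact hexp.le
  push_neg at hkq
  -- counting bound
  have hcount : bad2.card ≤ q'.choose k * (q' ^ k * n ^ (q' - k)) := by
    have hsub2 : bad2 ⊆ (Finset.powersetCard k (Finset.univ : Finset (Fin q'))).biUnion
        (fun S => Finset.univ.filter (fun σ : Fin q' → Fin n =>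
          ∀ i ∈ S, ∃ j : Fin q', j < i ∧ σ j = σ i)) := by
      intro σ hσ
      rw [hbad2, Finset.mem_filter] at hσ
      have hcard : k ≤ (Finset.univ.filter
          (fun i : Fin q' => ∃ j : Fin q', j < i ∧ σ j = σ i)).card := by
        rw [← hreapp σ]; exact hσ.2
      obtain ⟨T, hTsub, hTcard⟩ := Finset.exists_subset_card_eq hcard
      rw [Finset.mem_biUnion]
      refine ⟨T, Finset.mem_powersetCard_univ.mpr hTcard, ?_⟩
      rw [Finset.mem_filter]
      refine ⟨Finset.mem_univ _, fun i hi => ?_⟩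
      have := hTsub hi
      rw [Finset.mem_filter] at this
      exact this.2
    calc bad2.card ≤ _ := Finset.card_le_card hsub2
      _ ≤ ∑ S ∈ Finset.powersetCard k (Finset.univ : Finset (Fin q')),
            (Finset.univ.filter (fun σ : Fin q' → Fin n =>
              ∀ i ∈ S, ∃ j : Fin q', j < i ∧ σ j = σ i)).card :=
          Finset.card_biUnion_le
      _ ≤ ∑ _S ∈ Finset.powersetCard k (Finset.univ : Finset (Fin q')),
            (q' ^ k * n ^ (q' - k)) := by
          refine Finset.sum_le_sum fun S hS => ?_
          exact count_single n q' k S (Finset.mem_powersetCard_univ.mp hS)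
      _ = q'.choose k * (q' ^ k * n ^ (q' - k)) := by
          rw [Finset.sum_const, Finset.card_powersetCard, Finset.card_univ,
            Fintype.card_fin, smul_eq_mul]
  -- real arithmetic
  have hq2 : (q':ℝ) ^ 2 ≤ (n:ℝ) := by
    have h := pow_le_pow_left₀ (by positivity) hq 2
    rwa [Real.sq_sqrt hn0.le] at h
  have hfacpos : (0:ℝ) < (k ! : ℝ) := by positivity
  have hnk : (0:ℝ) < (n:ℝ) ^ k := by positivity
  have hpow : (n:ℝ) ^ q' = (n:ℝ) ^ (q' - k) * (n:ℝ) ^ k := by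
    rw [← pow_add, Nat.sub_add_cancel hkq]
  have hchoose : (q'.choose k : ℝ) ≤ (q':ℝ) ^ k / (k ! : ℝ) := by
    have := Nat.choose_le_pow_div (α := ℝ) k q'
    simpa using this
  have hkey : ((bad.card : ℝ)) / (n:ℝ) ^ q' ≤ 1 / (k ! : ℝ) := by
    have h1 : (bad.card : ℝ) ≤ (q'.choose k : ℝ) * ((q':ℝ) ^ k * (n:ℝ) ^ (q' - k)) := by
      have hb : bad.card ≤ q'.choose k * (q' ^ k * n ^ (q' - k)) :=
        le_trans (Finset.card_le_card hsub1) hcount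
      exact_mod_cast hb
    rw [div_le_div_iff₀ hnq hfacpos, one_mul]
    calc (bad.card : ℝ) * (k ! : ℝ)
        ≤ ((q':ℝ) ^ k / (k ! : ℝ)) * ((q':ℝ) ^ k * (n:ℝ) ^ (q' - k)) * (k ! : ℝ) := by
          refine mul_le_mul_of_nonneg_right (le_trans h1 ?_) hfacpos.le
          refine mul_le_mul_of_nonneg_right hchoose (by positivity)
      _ = ((q':ℝ) ^ 2) ^ k * (n:ℝ) ^ (q' - k) := by
          field_simp
          ring
      _ ≤ (n:ℝ) ^ k * (n:ℝ) ^ (q' - k) := by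
          refine mul_le_mul_of_nonneg_right ?_ (by positivity)
          exact pow_le_pow_left₀ (by positivity) hq2 k
      _ = (n:ℝ) ^ q' := by rw [hpow]; ring
  refine le_trans hkey ?_
  -- 1/k! ≤ exp (-γ)
  have hexpk : Real.exp γ ≤ (k ! : ℝ) :=
    le_trans (Real.exp_le_exp.mpr hkγ) (exp_le_factorial k hk5)
  rw [Real.exp_neg]
  rw [one_div]
  exact inv_anti₀ (Real.exp_pos γ) hexpk
end

section
/- Define probabilities p_c^{2t} by p_0^0 = 1, p_c^0 = 0 for c ≥ 1, and the recurrences p_0^{2t+2} = (1/2)p_0^{2t} + (1/2)p_1^{2t} + (1/4)p_2^{2t}; p_1^{2t+2} = (1/2)p_0^{2t} + (1/4)p_1^{2t} + (1/4)p_2^{2t} + (1/4)p_3^{2t}; and p_c^{2t+2} = (1/4)(p_{c-1}^{2t} + p_c^{2t} + p_{c+1}^{2t} + p_{c+2}^{2t}) for c ≥ 2. Then for all t ≥ 0: p_0^{2t} ≥ p_1^{2t}, and p_c^{2t} ≥ 2·p_{c+1}^{2t} for all c ≥ 1. -/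
theorem random_walk_monotone_distribution (p : ℕ → ℕ → ℝ)
    (h00 : p 0 0 = 1) (h0 : ∀ c : ℕ, 1 ≤ c → p c 0 = 0)
    (hrec0 : ∀ t : ℕ, p 0 (t + 1) = 1 / 2 * p 0 t + 1 / 2 * p 1 t + 1 / 4 * p 2 t)
    (hrec1 : ∀ t : ℕ, p 1 (t + 1)
      = 1 / 2 * p 0 t + 1 / 4 * p 1 t + 1 / 4 * p 2 t + 1 / 4 * p 3 t)
    (hrec : ∀ (c t : ℕ), 2 ≤ c → p c (t + 1)
      = 1 / 4 * p (c - 1) t + 1 / 4 * p c t + 1 / 4 * p (c + 1) t + 1 / 4 * p (c + 2) t) :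
    ∀ t : ℕ, p 0 t ≥ p 1 t ∧ ∀ c : ℕ, 1 ≤ c → p c t ≥ 2 * p (c + 1) t := by
  have hnn : ∀ t c, 0 ≤ p c t := by
    intro t
    induction t with
    | zero =>
      intro c
      rcases Nat.eq_zero_or_pos c with h | h
      · simp [h, h00]
      · simp [h0 c h]
    | succ t ih =>
      intro c
      match c with
      | 0 =>
        rw [hrec0]
        have := ih 0; have := ih 1; have := ih 2; linarith
      | 1 =>
        rw [hrec1]
        have := ih 0; have := ih 1; have := ih 2; have := ih 3; linarith
      | (n+2) =>
        rw [hrec (n+2) t (by omega)]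
        have e : n + 2 - 1 = n + 1 := rfl
        rw [e]
        have := ih (n+1); have := ih (n+2); have := ih (n+3); have := ih (n+4)
        linarith
  intro t
  induction t with
  | zero =>
    constructor
    · rw [h00, h0 1 le_rfl]; norm_num
    · intro c hc; rw [h0 c hc, h0 (c+1) (by omega)]; norm_num
  | succ t ih =>
    obtain ⟨h01, hc⟩ := ih
    have key : ∀ c k : ℕ, 1 ≤ c → p (c + k) t ≤ p c t / 2 ^ k := by
      intro c k hc1
      induction k with
      | zero => simp
      | succ k ihk =>
        have h1 := hc (c + k) (by omega)
        calc p (c + (k+1)) t = p (c + k + 1) t := rfl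
          _ ≤ p (c + k) t / 2 := by linarith
          _ ≤ (p c t / 2 ^ k) / 2 := by linarith
          _ = p c t / 2 ^ (k+1) := by ring
    constructor
    · rw [hrec0 t, hrec1 t]
      have k2 := key 1 2 le_rfl
      have n3 := hnn t 3
      norm_num at k2
      linarith
    · intro c hc1
      match c, hc1 with
      | 1, _ =>
        rw [hrec1 t, hrec 2 t (by omega)]
        have e : (2 : ℕ) - 1 = 1 := rfl
        rw [e]
        have k2 := key 1 1 le_rfl
        have k3 := key 1 2 le_rfl
        have k4 := key 1 3 le_rfl
        norm_num at k2 k3 k4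
        have n4 := hnn t 4
        linarith
      | (m+2), _ =>
        rw [hrec (m+2) t (by omega), hrec (m+3) t (by omega)]
        have e1 : m + 2 - 1 = m + 1 := rfl
        have e2 : m + 3 - 1 = m + 2 := rfl
        rw [e1, e2]
        have k2 := key (m+1) 1 (by omega)
        have k3 := key (m+1) 2 (by omega)
        have k4 := key (m+1) 3 (by omega)
        have k5 := key (m+1) 4 (by omega)
        have e3 : m + 1 + 1 = m + 2 := rfl
        have e4 : m + 1 + 2 = m + 3 := rfl
        have e5 : m + 1 + 3 = m + 4 := rfl
        have e6 : m + 1 + 4 = m + 5 := rfl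
        rw [e3] at k2; rw [e4] at k3; rw [e5] at k4; rw [e6] at k5
        norm_num at k2 k3 k4 k5
        have n5 := hnn t (m+5)
        have e7 : m + 3 + 2 = m + 5 := rfl
        rw [e7]
        linarith
end

section
/- Let (R_t) be a stochastic process on the nonnegative integers with R_0 = 0 such that: if R_t ≤ 5 then R_{t+1} ≤ 6; and if R_t ≥ 6 then, for some a^t ∈ [0,1], R_{t+1} = R_t + 1 with probability (3/5)a^t, R_{t+1} = R_t - 4 with probability (2/5)a^t, and R_{t+1} = R_t - 2 with probability 1 - a^t. Then p_i^t := P(R_t = i) satisfies p_i^t ≤ (2/3)^{i-6} for all i ≥ 6 and all t ≥ 0. -/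
/-- `p t i = P(R_t = i)` is the distribution at time `t` of the biased random
walk `(R_t)` on the nonnegative integers: `R_0 = 0`; from a state `≤ 5` the walk
moves to a state `≤ 6`; and from a state `i ≥ 6` it moves to `i + 1` with
probability `(3/5)·aᵗ`, to `i - 4` with probability `(2/5)·aᵗ`, and to `i - 2`
with probability `1 - aᵗ`.  Consequently, for `i > 6`, the mass at `i` at time
`t+1` comes only from the states `i + 4`, `i - 1` and `i + 2` (all `≥ 6`). -/
theorem biased_walk_tail_pointwise (p : ℕ → ℕ → ℝ) (a : ℕ → ℝ)
    (ha : ∀ t, 0 ≤ a t ∧ a t ≤ 1)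
    (hnonneg : ∀ t i, 0 ≤ p t i)
    (hprob : ∀ t, HasSum (p t) 1)
    (hinit : ∀ i : ℕ, p 0 i = if i = 0 then 1 else 0)
    (hrec : ∀ (t i : ℕ), 6 < i →
      p (t + 1) i
        = 2 / 5 * a t * p t (i + 4) + 3 / 5 * a t * p t (i - 1)
          + (1 - a t) * p t (i + 2)) :
    ∀ (t i : ℕ), 6 ≤ i → p t i ≤ (2 / 3 : ℝ) ^ (i - 6) := by

  intro t
  induction t with
  | zero =>
    intro i hi
    rw [hinit i, if_neg (by omega)]
    positivity
  | succ t ih =>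
    intro i hi
    rcases eq_or_lt_of_le hi with h6 | h7
    · subst h6
      simpa using le_hasSum (hprob (t + 1)) 6 (fun j _ => hnonneg (t + 1) j)
    · have h7 : 7 ≤ i := h7
      rw [hrec t i (by omega)]
      have e1 := ih (i + 4) (by omega)
      have e2 := ih (i - 1) (by omega)
      have e3 := ih (i + 2) (by omega)
      have k1 : i + 4 - 6 = (i - 7) + 5 := by omega
      have k2 : i - 1 - 6 = i - 7 := by omega
      have k3 : i + 2 - 6 = (i - 7) + 3 := by omega
      have k4 : i - 6 = (i - 7) + 1 := by omega
      rw [k1] at e1; rw [k2] at e2; rw [k3] at e3; rw [k4]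
      set x : ℝ := (2 / 3 : ℝ) ^ (i - 7) with hx
      have hxpos : (0 : ℝ) < x := by positivity
      rw [pow_add] at e1 e3 ⊢
      obtain ⟨ha0, ha1⟩ := ha t
      have n1 := hnonneg t (i + 4)
      have n2 := hnonneg t (i - 1)
      have n3 := hnonneg t (i + 2)
      nlinarith [mul_le_mul_of_nonneg_left e1 (by linarith : (0:ℝ) ≤ 2 / 5 * a t),
        mul_le_mul_of_nonneg_left e2 (by linarith : (0:ℝ) ≤ 3 / 5 * a t),
        mul_le_mul_of_nonneg_left e3 (by linarith : (0:ℝ) ≤ 1 - a t)]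
end
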